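/- For all systems φ, θ on (G, X) and every probability measure m on G × X, one has Δ(m, φ⊛θ) ≤ Δ(mQ_φ, θ) + Δ(m̄Q_φ, θ). -/

import Mathlib

/-!
Write `A_x k = k θ^{k⁻¹·x}`. Unfolding the convolution, `g (φ⊛θ)^{g⁻¹·x}` and `(φ⊛θ)^x` are the
mixtures of the same Markov kernel `A_x` against `g φ^{g⁻¹·x}` and against `φ^x`. Passing through
`θ^x` by the triangle inequality, and using convexity of the total variation,
`‖β.bind A − ν‖ ≤ ∫ ‖A k − ν‖ dβ(k)`, bounds `D_{φ⊛θ}(g, x)` by the `g φ^{g⁻¹·x}`-average plus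
the `φ^x`-average of `k ↦ ‖A_x k − θ^x‖ = D_θ(k, x)`. Integrating against `m`, these two averages
are exactly `Δ(mQ_φ, θ)` and `Δ(m̄Q_φ, θ)`.
-/

open MeasureTheory Filter Topology

/-- Total variation norm `‖μ − ν‖` of the difference of two finite measures. -/
noncomputable def tv {α : Type*} [MeasurableSpace α] (μ ν : Measure α) : ℝ :=
  ((μ - ν) Set.univ + (ν - μ) Set.univ).toReal

/-- Pushforward `gμ` of a measure on `G` under the left translation `h ↦ g * h`. -/
noncomputable def ltrans {G : Type*} [MeasurableSpace G] [Mul G] (g : G) (μ : Measure G) :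
    Measure G :=
  μ.map (fun h => g * h)

/-- Convolution `α * β` of measures on `G`: the pushforward of `α ⊗ β` under
`(g, h) ↦ g * h`. -/
noncomputable def mconv {G : Type*} [MeasurableSpace G] [Mul G] (μ ν : Measure G) : Measure G :=
  (μ.prod ν).map (fun p : G × G => p.1 * p.2)

/-- `convPow θ k = θ^{*k}`, the `k`-th convolution power of `θ` (with `θ^{*0} = δ_1`). -/
noncomputable def convPow {G : Type*} [MeasurableSpace G] [Monoid G] (θ : Measure G) :
    ℕ → Measure G
  | 0 => Measure.dirac 1
  | (k + 1) => mconv θ (convPow θ k)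

/-- Mean discrepancy `Δ(m, θ) = ∫_G ‖gθ − θ‖ dm(g)`. -/
noncomputable def disc {G : Type*} [MeasurableSpace G] [Mul G] (m θ : Measure G) : ℝ :=
  ∫ g, tv (ltrans g θ) θ ∂m

/-- A system on `(G, X)`: a Markov kernel `x ↦ θ^x` from `X` to `G`, i.e. a measurable
family of Borel probability measures on `G`. -/
def IsSystem {G X : Type*} [MeasurableSpace G] [MeasurableSpace X] (θ : X → Measure G) : Prop :=
  Measurable θ ∧ ∀ x, IsProbabilityMeasure (θ x)

/-- Discrepancy function of a system: `D_θ(g, x) = ‖g θ^{g⁻¹·x} − θ^x‖`. -/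
noncomputable def Dsys {G X : Type*} [MeasurableSpace G] [Group G] [MulAction G X]
    (θ : X → Measure G) (p : G × X) : ℝ :=
  tv (ltrans p.1 (θ (p.1⁻¹ • p.2))) (θ p.2)

/-- Convolution of systems: `(θ⊛φ)^x = ∫_G g φ^{g⁻¹·x} dθ^x(g)`. -/
noncomputable def sconv {G X : Type*} [MeasurableSpace G] [Group G] [MulAction G X]
    (θ φ : X → Measure G) : X → Measure G :=
  fun x => (θ x).bind fun g => ltrans g (φ (g⁻¹ • x))

/-- `k`-fold convolution power `θ^{⊛k}` of a system (with `θ^{⊛0} = δ_1` fibrewise). -/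
noncomputable def sconvPow {G X : Type*} [MeasurableSpace G] [Group G] [MulAction G X]
    (θ : X → Measure G) : ℕ → X → Measure G
  | 0 => fun _ => Measure.dirac 1
  | (k + 1) => sconv θ (sconvPow θ k)

/-- Mean discrepancy `Δ(m, θ) = ∫_{G×X} D_θ dm` of a system against a measure on `G × X`. -/
noncomputable def sdisc {G X : Type*} [MeasurableSpace G] [MeasurableSpace X] [Group G]
    [MulAction G X] (m : Measure (G × X)) (θ : X → Measure G) : ℝ :=
  ∫ p, Dsys θ p ∂m

/-- The measure `mQ_φ` on `G × X`:
`mQ_φ(A) = ∫_{G×X} ∫_G 1_A(g h, x) dφ^{g⁻¹·x}(h) dm(g, x)`. -/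
noncomputable def mQ {G X : Type*} [MeasurableSpace G] [MeasurableSpace X] [Group G]
    [MulAction G X] (m : Measure (G × X)) (φ : X → Measure G) : Measure (G × X) :=
  m.bind fun p => (φ (p.1⁻¹ • p.2)).map fun h => (p.1 * h, p.2)

/-- The measure `m̄Q_φ` on `G × X`:
`m̄Q_φ(A) = ∫_{G×X} ∫_G 1_A(h, x) dφ^{x}(h) dm(g, x)`. -/
noncomputable def mbarQ {G X : Type*} [MeasurableSpace G] [MeasurableSpace X] [Group G]
    (m : Measure (G × X)) (φ : X → Measure G) : Measure (G × X) :=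
  m.bind fun p => (φ p.2).map fun h => (h, p.2)

open Set Function ProbabilityTheory
open scoped ENNReal

namespace MeasureTheory.Measure

variable {α β : Type*} [MeasurableSpace α] [MeasurableSpace β]

/-- The total variation `tv` before the coercion to `ℝ`: `tv μ ν = (etv μ ν).toReal` holds
by definition. -/
noncomputable def etv (μ ν : Measure α) : ℝ≥0∞ := (μ - ν) univ + (ν - μ) univ

lemma etv_comm (μ ν : Measure α) : etv μ ν = etv ν μ := add_comm _ _

lemma etv_le_two (μ ν : Measure α) [IsProbabilityMeasure μ] [IsProbabilityMeasure ν] :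
    etv μ ν ≤ 2 :=
  calc etv μ ν ≤ μ univ + ν univ := add_le_add (sub_le univ) (sub_le univ)
  _ = 2 := by simp [one_add_one_eq_two]

lemma sub_le_sub_add_sub (μ₁ μ₂ μ₃ : Measure α) [IsFiniteMeasure μ₁] [IsFiniteMeasure μ₂]
    [IsFiniteMeasure μ₃] : μ₁ - μ₃ ≤ μ₁ - μ₂ + (μ₂ - μ₃) := by
  refine sub_le_of_le_add ?_
  calc μ₁ ≤ μ₁ - μ₂ + μ₂ := sub_le_iff_le_add.1 le_rfl
  _ ≤ μ₁ - μ₂ + (μ₂ - μ₃ + μ₃) := by gcongr; exact sub_le_iff_le_add.1 le_rfl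
  _ = μ₁ - μ₂ + (μ₂ - μ₃) + μ₃ := (add_assoc _ _ _).symm

lemma etv_triangle (μ₁ μ₂ μ₃ : Measure α) [IsFiniteMeasure μ₁] [IsFiniteMeasure μ₂]
    [IsFiniteMeasure μ₃] : etv μ₁ μ₃ ≤ etv μ₁ μ₂ + etv μ₂ μ₃ :=
  calc etv μ₁ μ₃ ≤ (μ₁ - μ₂ + (μ₂ - μ₃)) univ + (μ₃ - μ₂ + (μ₂ - μ₁)) univ :=
        add_le_add (sub_le_sub_add_sub μ₁ μ₂ μ₃ univ) (sub_le_sub_add_sub μ₃ μ₂ μ₁ univ)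
  _ = etv μ₁ μ₂ + etv μ₂ μ₃ := by simp only [etv, add_apply]; ring

end MeasureTheory.Measure

open MeasureTheory Measure

namespace ProbabilityTheory.Kernel

variable {α β γ : Type*} [MeasurableSpace α] [MeasurableSpace β] [MeasurableSpace γ]

lemma measurable_sub_apply [MeasurableSpace.CountablyGenerated β] (κ η : Kernel α β)
    [IsFiniteKernel κ] [IsFiniteKernel η] : Measurable fun a => κ a - η a := by
  -- `κ a - η a` has density `∂κ/∂ξ - ∂η/∂ξ` w.r.t. `ξ = κ + η`, and the kernel Radon-Nikodym
  -- derivatives are jointly measurable.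
  set ξ := κ + η
  have hdensity : ∀ (ζ : Kernel α β) [IsFiniteKernel ζ], (∀ a, ζ a ≤ ξ a) → ∀ a,
      (ξ a).withDensity (rnDeriv ζ ξ a) = ζ a := fun ζ _ hζ a => by
    rw [← Kernel.withDensity_apply ξ (measurable_rnDeriv ζ ξ)]
    exact withDensity_rnDeriv_eq (Measure.absolutelyContinuous_of_le (hζ a))
  have hκ : ∀ a, κ a ≤ ξ a := fun a => Measure.le_add_right le_rfl
  have hη : ∀ a, η a ≤ ξ a := fun a => Measure.le_add_left le_rfl
  have hsub : ∀ a, κ a - η a =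
      ξ.withDensity (fun a b => rnDeriv κ ξ a b - rnDeriv η ξ a b) a := by
    intro a
    have : IsFiniteMeasure ((ξ a).withDensity (rnDeriv η ξ a)) := by
      rw [hdensity η hη a]; infer_instance
    rw [Kernel.withDensity_apply _ ((measurable_rnDeriv κ ξ).sub (measurable_rnDeriv η ξ)),
      show (fun b => rnDeriv κ ξ a b - rnDeriv η ξ a b) = rnDeriv κ ξ a - rnDeriv η ξ a from rfl,
      withDensity_sub (measurable_rnDeriv_right κ ξ a) (measurable_rnDeriv_right η ξ a),
      hdensity κ hκ, hdensity η hη]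
  simp_rw [hsub]
  exact Kernel.measurable _

lemma measurable_etv [MeasurableSpace.CountablyGenerated β] (κ η : Kernel α β)
    [IsFiniteKernel κ] [IsFiniteKernel η] : Measurable fun a => etv (κ a) (η a) :=
  ((measurable_coe MeasurableSet.univ).comp (measurable_sub_apply κ η)).add
    ((measurable_coe MeasurableSet.univ).comp (measurable_sub_apply η κ))

lemma measurable_map_apply (κ : Kernel α β) [IsSFiniteKernel κ] {f : α → β → γ}
    (hf : Measurable (uncurry f)) : Measurable fun a => (κ a).map (f a) := by
  refine measurable_of_measurable_coe _ fun s hs => ?_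
  have hmap : (fun a => (κ a).map (f a) s) = fun a => κ a (Prod.mk a ⁻¹' (uncurry f ⁻¹' s)) :=
    funext fun a => Measure.map_apply (hf.comp measurable_prodMk_left) hs
  rw [hmap]
  exact measurable_kernel_prodMk_left (hf hs)

lemma measurable_bind_apply (κ : Kernel α β) [IsSFiniteKernel κ] {A : α → β → Measure γ}
    (hA : Measurable (uncurry A)) : Measurable fun a => (κ a).bind (A a) := by
  refine measurable_of_measurable_coe _ fun s hs => ?_
  have hbind : (fun a => (κ a).bind (A a) s) = fun a => ∫⁻ b, A a b s ∂κ a :=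
    funext fun a => bind_apply hs (hA.comp measurable_prodMk_left).aemeasurable
  rw [hbind]
  exact ((measurable_coe hs).comp hA).lintegral_kernel_prod_right'

end ProbabilityTheory.Kernel

namespace MeasureTheory.Measure

variable {α β : Type*} [MeasurableSpace α] [MeasurableSpace β]
  [MeasurableSpace.CountablyGenerated β]

lemma bind_sub_bind_le (m : Measure α) (κ η : Kernel α β) [IsFiniteKernel κ]
    [IsFiniteKernel η] : m.bind κ - m.bind η ≤ m.bind fun a => κ a - η a := by
  have hsub := Kernel.measurable_sub_apply κ η
  refine sub_le_of_le_add (Measure.le_iff.2 fun s hs => ?_)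
  have hsub_s : Measurable fun a => (κ a - η a) s := (measurable_coe hs).comp hsub
  rw [add_apply, bind_apply hs κ.aemeasurable, bind_apply hs hsub.aemeasurable,
    bind_apply hs η.aemeasurable, ← lintegral_add_left hsub_s]
  exact lintegral_mono fun a => (sub_le_iff_le_add.1 le_rfl : κ a ≤ κ a - η a + η a) s

lemma etv_bind_le (m : Measure α) (κ η : Kernel α β) [IsFiniteKernel κ] [IsFiniteKernel η] :
    etv (m.bind κ) (m.bind η) ≤ ∫⁻ a, etv (κ a) (η a) ∂m := by
  have hsub_univ : ∀ (κ η : Kernel α β) [IsFiniteKernel κ] [IsFiniteKernel η],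
      (m.bind κ - m.bind η) univ ≤ ∫⁻ a, (κ a - η a) univ ∂m := fun κ η _ _ =>
    (bind_sub_bind_le m κ η univ).trans_eq
      (bind_apply MeasurableSet.univ (Kernel.measurable_sub_apply κ η).aemeasurable)
  calc etv (m.bind κ) (m.bind η)
      ≤ ∫⁻ a, (κ a - η a) univ ∂m + ∫⁻ a, (η a - κ a) univ ∂m :=
        add_le_add (hsub_univ κ η) (hsub_univ η κ)
  _ = ∫⁻ a, etv (κ a) (η a) ∂m := (lintegral_add_left
        ((measurable_coe MeasurableSet.univ).comp (Kernel.measurable_sub_apply κ η)) _).symm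

lemma etv_bind_bind_le (μ₁ μ₂ : Measure α) [IsProbabilityMeasure μ₁]
    [IsProbabilityMeasure μ₂] (κ : Kernel α β) [IsMarkovKernel κ] (ν : Measure β)
    [IsProbabilityMeasure ν] :
    etv (μ₁.bind κ) (μ₂.bind κ) ≤ ∫⁻ a, etv (κ a) ν ∂μ₁ + ∫⁻ a, etv (κ a) ν ∂μ₂ := by
  have hconst : ∀ (μ : Measure α) [IsProbabilityMeasure μ],
      etv (μ.bind κ) ν ≤ ∫⁻ a, etv (κ a) ν ∂μ := fun μ _ => by
    have hν : μ.bind (Kernel.const α ν) = ν := by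
      rw [const_comp, measure_univ, one_smul]
    simpa only [hν, Kernel.const_apply] using etv_bind_le μ κ (Kernel.const α ν)
  calc etv (μ₁.bind κ) (μ₂.bind κ) ≤ etv (μ₁.bind κ) ν + etv ν (μ₂.bind κ) := etv_triangle _ _ _
  _ ≤ _ := by
    rw [etv_comm ν]
    exact add_le_add (hconst μ₁) (hconst μ₂)

end MeasureTheory.Measure

section Translation

variable {G : Type*} [MeasurableSpace G]

instance isProbabilityMeasure_ltrans [Mul G] [MeasurableMul G] (g : G) (μ : Measure G)
    [IsProbabilityMeasure μ] : IsProbabilityMeasure (ltrans g μ) :=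
  isProbabilityMeasure_map (measurable_const_mul g).aemeasurable

lemma ltrans_ltrans [Semigroup G] [MeasurableMul G] (g h : G) (μ : Measure G) :
    ltrans g (ltrans h μ) = ltrans (g * h) μ := by
  simp only [ltrans, map_map (measurable_const_mul g) (measurable_const_mul h), comp_def,
    mul_assoc]

end Translation

namespace IsSystem

variable {G X : Type*} [MeasurableSpace G] [MeasurableSpace X] {φ θ : X → Measure G}

noncomputable def kernel (hθ : IsSystem θ) : Kernel X G := ⟨θ, hθ.1⟩

instance (hθ : IsSystem θ) : IsMarkovKernel hθ.kernel := ⟨hθ.2⟩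

lemma measurable_mbarQ_kernel (hφ : IsSystem φ) :
    Measurable fun p : G × X => (φ p.2).map fun h => (h, p.2) :=
  (hφ.kernel.comap (Prod.snd : G × X → X) measurable_snd).measurable_map_apply
    (f := fun p h => (h, p.2)) (by fun_prop)

variable [Group G]

lemma isProbabilityMeasure_mbarQ (hφ : IsSystem φ) (m : Measure (G × X))
    [IsProbabilityMeasure m] : IsProbabilityMeasure (mbarQ m φ) :=
  isProbabilityMeasure_bind hφ.measurable_mbarQ_kernel.aemeasurable (ae_of_all _ fun p =>
    have := hφ.2 p.2; isProbabilityMeasure_map (by fun_prop))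

lemma lintegral_mbarQ (hφ : IsSystem φ) {f : G × X → ℝ≥0∞} (hf : Measurable f)
    (m : Measure (G × X)) :
    ∫⁻ p, f p ∂(mbarQ m φ) = ∫⁻ p, ∫⁻ h, f (h, p.2) ∂φ p.2 ∂m := by
  rw [mbarQ, lintegral_bind hφ.measurable_mbarQ_kernel.aemeasurable hf.aemeasurable]
  exact lintegral_congr fun p => lintegral_map hf (by fun_prop)

variable [MeasurableMul₂ G] [MeasurableInv G] [MulAction G X] [MeasurableSMul₂ G X]

noncomputable def translate (hθ : IsSystem θ) : Kernel (G × X) G where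
  toFun p := ltrans p.1 (θ (p.1⁻¹ • p.2))
  measurable' := (hθ.kernel.comap (fun p : G × X => p.1⁻¹ • p.2) (by fun_prop)).measurable_map_apply
    (f := fun p h => p.1 * h) (by fun_prop)

lemma translate_apply (hθ : IsSystem θ) (p : G × X) :
    hθ.translate p = ltrans p.1 (θ (p.1⁻¹ • p.2)) := rfl

instance (hθ : IsSystem θ) : IsMarkovKernel hθ.translate :=
  ⟨fun p => have := hθ.2 (p.1⁻¹ • p.2); isProbabilityMeasure_ltrans p.1 _⟩

lemma ltrans_translate (hθ : IsSystem θ) (g k : G) (y : X) :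
    ltrans g (hθ.translate (k, y)) = hθ.translate (g * k, g • y) := by
  simp only [translate_apply, ltrans_ltrans, mul_inv_rev, mul_smul, inv_smul_smul]

lemma sconv_eq_bind_translate (hθ : IsSystem θ) (x : X) :
    sconv φ θ x = (φ x).bind fun g => hθ.translate (g, x) := rfl

protected lemma sconv (hφ : IsSystem φ) (hθ : IsSystem θ) : IsSystem (sconv φ θ) :=
  ⟨hφ.kernel.measurable_bind_apply (A := fun x g => hθ.translate (g, x))
      (hθ.translate.measurable.comp measurable_swap),
    fun x => have := hφ.2 x; isProbabilityMeasure_bind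
      (hθ.translate.measurable.comp measurable_prodMk_right).aemeasurable
      (ae_of_all _ fun g => IsMarkovKernel.isProbabilityMeasure (κ := hθ.translate) (g, x))⟩

lemma ltrans_sconv (hθ : IsSystem θ) (g : G) (x : X) :
    ltrans g (sconv φ θ (g⁻¹ • x)) =
      (ltrans g (φ (g⁻¹ • x))).bind fun k => hθ.translate (k, x) := by
  have hA : ∀ y, Measurable fun k => hθ.translate (k, y) := fun y =>
    hθ.translate.measurable.comp measurable_prodMk_right
  ext s hs
  have hAs : Measurable fun k => hθ.translate (k, x) s := (measurable_coe hs).comp (hA x)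
  rw [ltrans, map_apply (measurable_const_mul g) hs, sconv_eq_bind_translate hθ,
    bind_apply (measurable_const_mul g hs) (hA _).aemeasurable, bind_apply hs (hA x).aemeasurable,
    ltrans, lintegral_map hAs (measurable_const_mul g)]
  refine lintegral_congr fun k => ?_
  rw [← map_apply (measurable_const_mul g) hs, ← ltrans, ltrans_translate, smul_inv_smul]

lemma measurable_mQ_kernel (hφ : IsSystem φ) :
    Measurable fun p : G × X => (φ (p.1⁻¹ • p.2)).map fun h => (p.1 * h, p.2) :=
  (hφ.kernel.comap (fun p : G × X => p.1⁻¹ • p.2) (by fun_prop)).measurable_map_apply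
    (f := fun p h => (p.1 * h, p.2)) (by fun_prop)

lemma isProbabilityMeasure_mQ (hφ : IsSystem φ) (m : Measure (G × X)) [IsProbabilityMeasure m] :
    IsProbabilityMeasure (mQ m φ) :=
  isProbabilityMeasure_bind hφ.measurable_mQ_kernel.aemeasurable (ae_of_all _ fun p =>
    have := hφ.2 (p.1⁻¹ • p.2); isProbabilityMeasure_map (by fun_prop))

lemma lintegral_mQ (hφ : IsSystem φ) {f : G × X → ℝ≥0∞} (hf : Measurable f)
    (m : Measure (G × X)) :
    ∫⁻ p, f p ∂(mQ m φ) = ∫⁻ p, ∫⁻ h, f (p.1 * h, p.2) ∂φ (p.1⁻¹ • p.2) ∂m := by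
  rw [mQ, lintegral_bind hφ.measurable_mQ_kernel.aemeasurable hf.aemeasurable]
  exact lintegral_congr fun p => lintegral_map hf (by fun_prop)

end IsSystem

section Discrepancy

variable {G X : Type*} [MeasurableSpace G] [MeasurableSpace X] [Group G] [MeasurableMul₂ G]
  [MeasurableInv G] [MulAction G X] [MeasurableSMul₂ G X] {φ θ : X → Measure G}

/-- `Dsys θ p = (eDsys θ p).toReal` holds by definition. -/
noncomputable def eDsys (θ : X → Measure G) (p : G × X) : ℝ≥0∞ :=
  etv (ltrans p.1 (θ (p.1⁻¹ • p.2))) (θ p.2)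

lemma eDsys_le_two (hθ : IsSystem θ) (p : G × X) : eDsys θ p ≤ 2 :=
  have := hθ.2 p.2
  etv_le_two (hθ.translate p) _

lemma lintegral_eDsys_ne_top (hθ : IsSystem θ) (μ : Measure (G × X)) [IsFiniteMeasure μ] :
    ∫⁻ p, eDsys θ p ∂μ ≠ ∞ :=
  ((lintegral_mono (eDsys_le_two hθ)).trans_lt (by
    rw [lintegral_const]; exact ENNReal.mul_lt_top ENNReal.ofNat_lt_top (measure_lt_top μ univ))).ne

variable [MeasurableSpace.CountablyGenerated G]

lemma measurable_eDsys (hθ : IsSystem θ) : Measurable (eDsys θ) :=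
  Kernel.measurable_etv hθ.translate (hθ.kernel.comap Prod.snd measurable_snd)

lemma sdisc_eq_toReal_lintegral (hθ : IsSystem θ) (m : Measure (G × X)) :
    sdisc m θ = (∫⁻ p, eDsys θ p ∂m).toReal :=
  integral_toReal (measurable_eDsys hθ).aemeasurable
    (ae_of_all _ fun p => (eDsys_le_two hθ p).trans_lt (by norm_num))

lemma eDsys_sconv_le (hφ : IsSystem φ) (hθ : IsSystem θ) (g : G) (x : X) :
    eDsys (sconv φ θ) (g, x) ≤
      ∫⁻ h, eDsys θ (g * h, x) ∂φ (g⁻¹ • x) + ∫⁻ h, eDsys θ (h, x) ∂φ x := by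
  have := hφ.2 x
  have := hφ.2 (g⁻¹ • x)
  have := hθ.2 x
  let A := hθ.translate.comap (fun k => (k, x)) measurable_prodMk_right
  have hAθ : Measurable fun k => etv (A k) (θ x) :=
    (measurable_eDsys hθ).comp measurable_prodMk_right
  calc eDsys (sconv φ θ) (g, x) = etv ((ltrans g (φ (g⁻¹ • x))).bind A) ((φ x).bind A) := by
        dsimp only [eDsys]; rw [hθ.ltrans_sconv]; rfl
  _ ≤ ∫⁻ k, etv (A k) (θ x) ∂(ltrans g (φ (g⁻¹ • x))) + ∫⁻ k, etv (A k) (θ x) ∂φ x :=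
        etv_bind_bind_le _ _ A _
  _ = _ := by rw [ltrans, lintegral_map hAθ (measurable_const_mul g)]; rfl

lemma lintegral_eDsys_sconv_le (hφ : IsSystem φ) (hθ : IsSystem θ) (m : Measure (G × X)) :
    ∫⁻ p, eDsys (sconv φ θ) p ∂m ≤
      ∫⁻ p, eDsys θ p ∂(mQ m φ) + ∫⁻ p, eDsys θ p ∂(mbarQ m φ) := by
  have hF : Measurable fun p : G × X => ∫⁻ h, eDsys θ (h, p.2) ∂φ p.2 :=
    (((measurable_eDsys hθ).comp measurable_swap).lintegral_kernel_prod_right'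
      (κ := hφ.kernel)).comp measurable_snd
  rw [hφ.lintegral_mQ (measurable_eDsys hθ), hφ.lintegral_mbarQ (measurable_eDsys hθ),
    ← lintegral_add_right _ hF]
  exact lintegral_mono fun p => eDsys_sconv_le hφ hθ p.1 p.2

end Discrepancy

theorem stmt10_general {G X : Type*} [TopologicalSpace G] [Group G] [IsTopologicalGroup G]
    [SecondCountableTopology G] [MeasurableSpace G] [BorelSpace G]
    [MeasurableSpace X] [MulAction G X] [MeasurableSMul₂ G X]
    (φ θ : X → Measure G) (hφ : IsSystem φ) (hθ : IsSystem θ)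
    (m : Measure (G × X)) (hm : IsProbabilityMeasure m) :
    sdisc m (sconv φ θ) ≤ sdisc (mQ m φ) θ + sdisc (mbarQ m φ) θ := by
  have := hφ.isProbabilityMeasure_mQ m
  have := hφ.isProbabilityMeasure_mbarQ m
  have hQ := lintegral_eDsys_ne_top hθ (mQ m φ)
  have hbarQ := lintegral_eDsys_ne_top hθ (mbarQ m φ)
  rw [sdisc_eq_toReal_lintegral (hφ.sconv hθ), sdisc_eq_toReal_lintegral hθ,
    sdisc_eq_toReal_lintegral hθ, ← ENNReal.toReal_add hQ hbarQ]
  exact ENNReal.toReal_mono (ENNReal.add_ne_top.2 ⟨hQ, hbarQ⟩) (lintegral_eDsys_sconv_le hφ hθ m)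

/-- For all systems `φ`, `θ` on `(G, X)` and every probability measure `m`
on `G × X`, `Δ(m, φ⊛θ) ≤ Δ(mQ_φ, θ) + Δ(m̄Q_φ, θ)`. -/
theorem stmt10 {G X : Type*} [TopologicalSpace G] [Group G] [IsTopologicalGroup G]
    [LocallyCompactSpace G] [SecondCountableTopology G] [MeasurableSpace G] [BorelSpace G]
    [MeasurableSpace X] [StandardBorelSpace X] [MulAction G X] [MeasurableSMul₂ G X]
    (φ θ : X → Measure G) (hφ : IsSystem φ) (hθ : IsSystem θ)
    (m : Measure (G × X)) (hm : IsProbabilityMeasure m) :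
    sdisc m (sconv φ θ) ≤ sdisc (mQ m φ) θ + sdisc (mbarQ m φ) θ :=
  stmt10_general φ θ hφ hθ m hm
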